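/- arXiv:1802.02895 — 5 statements merged into one kernel-verified Lean document; each statement's English description precedes it below -/
import Mathlib

section
/- Let K ≥ 1 be an integer, P > 0, and let h_1 ≥ h_2 ≥ ... ≥ h_K > 0 be channel gains. For a power vector p ∈ ℝ^K with p_k ≥ 0 and Σ_{k=1}^K p_k ≤ P, define R_k(p) = log((1 + h_k Σ_{j=1}^{k} p_j)/(1 + h_k Σ_{j=1}^{k-1} p_j)). Let θ_J ≥ 0 be a weight for each nonempty subset J ⊆ {1,...,K}, and let Γ be the set of all vectors r = (r_J)_{J nonempty, J ⊆ {1,...,K}} with r_J ≥ 0 for which there exists such a p with Σ_{J : max J = k} r_J ≤ R_k(p) for every k = 1,...,K. Then sup_{r ∈ Γ} Σ_J θ_J r_J = sup { Σ_{k=1}^K θ̃_k R_k(p) : p ∈ ℝ^K, p ≥ 0, Σ_k p_k ≤ P }, where θ̃_k = max { θ_J : J ⊆ {1,...,K}, max J = k }. -/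
/-!
Rates of sets `J` with the same maximum `k` share the budget `R_k(p)`, so for weights below
`θ̃_k` the weighted sum of rates is at most `∑ θ̃_k R_k(p)`. Conversely, spending each budget
`R_k(p) ≥ 0` entirely on a set `J` with `max J = k` and `θ_J = θ̃_k` attains that value. Hence
every value of either optimisation problem is dominated by a value of the other, and the suprema
agree (also in the degenerate unbounded or empty cases).
-/

open Finset

namespace Finset

variable {α : Type*} [LinearOrder α]

lemma nonempty_of_max_eq_coe {J : Finset α} {a : α} (hJ : J.max = a) : J.Nonempty :=
  ⟨a, mem_of_max hJ⟩

theorem sum_filter_nonempty_eq_sum_sum_filter_max_eq [Fintype α] {M : Type*} [AddCommMonoid M]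
    (f : Finset α → M) :
    ∑ J ∈ univ.filter (fun J : Finset α => J.Nonempty), f J
      = ∑ a : α, ∑ J ∈ univ.filter (fun J : Finset α => J.max = (a : WithBot α)), f J := by
  rw [← sum_fiberwise_of_maps_to (g := Finset.max) (t := univ.image ((↑) : α → WithBot α))
    (fun J hJ => by
      obtain ⟨a, ha⟩ := max_of_nonempty (mem_filter.1 hJ).2
      exact ha ▸ mem_image_of_mem _ (mem_univ a)),
    sum_image (fun a _ b _ hab => WithBot.coe_injective hab)]
  refine sum_congr rfl fun a _ => sum_congr ?_ fun _ _ => rfl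
  ext J
  simp only [mem_filter, mem_univ, true_and, and_iff_right_iff_imp]
  exact nonempty_of_max_eq_coe

variable [Fintype α] {R : Type*} [CommSemiring R] [PartialOrder R] [IsOrderedRing R]

theorem sum_filter_nonempty_mul_le_sum_mul {θ r : Finset α → R} {θmax c : α → R}
    (hθ : ∀ (a : α) J, J.max = (a : WithBot α) → θ J ≤ θmax a) (hθmax : ∀ a, 0 ≤ θmax a)
    (hr : ∀ J : Finset α, J.Nonempty → 0 ≤ r J)
    (hc : ∀ a : α, ∑ J ∈ univ.filter (fun J : Finset α => J.max = (a : WithBot α)), r J ≤ c a) :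
    ∑ J ∈ univ.filter (fun J : Finset α => J.Nonempty), θ J * r J ≤ ∑ a, θmax a * c a := by
  rw [sum_filter_nonempty_eq_sum_sum_filter_max_eq]
  refine sum_le_sum fun a _ => ?_
  calc ∑ J ∈ univ.filter (fun J : Finset α => J.max = (a : WithBot α)), θ J * r J
      ≤ ∑ J ∈ univ.filter (fun J : Finset α => J.max = (a : WithBot α)), θmax a * r J :=
        sum_le_sum fun J hJ => mul_le_mul_of_nonneg_right (hθ a J (mem_filter.1 hJ).2)
          (hr J (nonempty_of_max_eq_coe (mem_filter.1 hJ).2))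
    _ = θmax a * ∑ J ∈ univ.filter (fun J : Finset α => J.max = (a : WithBot α)), r J :=
        (mul_sum _ _ _).symm
    _ ≤ θmax a * c a := mul_le_mul_of_nonneg_left (hc a) (hθmax a)

theorem exists_rates_eq_of_max_eq {S : α → Finset α} (hS : ∀ a, (S a).max = a) {c : α → R}
    (hc : ∀ a, 0 ≤ c a) (θ : Finset α → R) :
    ∃ r : Finset α → R, (∀ J : Finset α, J.Nonempty → 0 ≤ r J) ∧
      (∀ a : α, ∑ J ∈ univ.filter (fun J : Finset α => J.max = (a : WithBot α)), r J = c a) ∧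
      ∑ J ∈ univ.filter (fun J : Finset α => J.Nonempty), θ J * r J = ∑ a, θ (S a) * c a := by
  classical
  set r : Finset α → R := fun J => ∑ b, if S b = J then c b else 0
  have hr_fiber : ∀ (a : α) J, J.max = (a : WithBot α) → r J = if S a = J then c a else 0 := by
    intro a J hJ
    refine sum_eq_single a (fun b _ hba => if_neg fun hSJ => hba ?_) (by simp)
    exact WithBot.coe_injective ((hS b).symm.trans (hSJ ▸ hJ))
  have hS_mem : ∀ a : α, S a ∈ univ.filter (fun J : Finset α => J.max = (a : WithBot α)) :=
    fun a => mem_filter.2 ⟨mem_univ _, hS a⟩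
  refine ⟨r, fun J _ => sum_nonneg fun b _ => ?_, fun a => ?_, ?_⟩
  · split_ifs
    exacts [hc b, le_rfl]
  · rw [sum_congr rfl fun J hJ => hr_fiber a J (mem_filter.1 hJ).2, sum_ite_eq, if_pos (hS_mem a)]
  · rw [sum_filter_nonempty_eq_sum_sum_filter_max_eq]
    refine sum_congr rfl fun a _ => ?_
    rw [sum_congr rfl fun J hJ => by rw [hr_fiber a J (mem_filter.1 hJ).2, mul_ite, mul_zero],
      sum_ite_eq, if_pos (hS_mem a)]

end Finset

theorem log_one_add_mul_sum_div_nonneg {ι : Type*} [Fintype ι] [LinearOrder ι] {g : ℝ}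
    (hg : 0 ≤ g) {p : ι → ℝ} (hp : ∀ j, 0 ≤ p j) (k : ι) :
    0 ≤ Real.log ((1 + g * ∑ j ∈ univ.filter (· ≤ k), p j) /
      (1 + g * ∑ j ∈ univ.filter (· < k), p j)) := by
  have hlt_le : ∑ j ∈ univ.filter (· < k), p j ≤ ∑ j ∈ univ.filter (· ≤ k), p j :=
    sum_le_sum_of_subset_of_nonneg (monotone_filter_right _ fun _ _ => le_of_lt)
      fun j _ _ => hp j
  have hlt_nonneg : 0 ≤ ∑ j ∈ univ.filter (· < k), p j := sum_nonneg fun j _ => hp j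
  exact Real.log_nonneg ((one_le_div (by positivity)).2 (by gcongr))

theorem stmt0_general (K : ℕ) (P : ℝ)
    (h : Fin K → ℝ) (hh : ∀ k, 0 < h k)
    (θ : Finset (Fin K) → ℝ) (hθ : ∀ J : Finset (Fin K), J.Nonempty → 0 ≤ θ J)
    (θt : Fin K → ℝ)
    (hθt : ∀ k : Fin K,
      IsGreatest {x : ℝ | ∃ J : Finset (Fin K),
        J.max = (k : WithBot (Fin K)) ∧ θ J = x} (θt k)) :
    sSup ((fun r : Finset (Fin K) → ℝ =>
        ∑ J ∈ Finset.univ.filter (fun J : Finset (Fin K) => J.Nonempty),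
          θ J * r J) ''
      {r | (∀ J : Finset (Fin K), J.Nonempty → 0 ≤ r J) ∧
        ∃ p : Fin K → ℝ, (∀ k, 0 ≤ p k) ∧ (∑ k, p k) ≤ P ∧
          ∀ k : Fin K,
            (∑ J ∈ Finset.univ.filter
                (fun J : Finset (Fin K) => J.max = (k : WithBot (Fin K))), r J)
              ≤ Real.log ((1 + h k * ∑ j ∈ Finset.univ.filter (· ≤ k), p j) /
                  (1 + h k * ∑ j ∈ Finset.univ.filter (· < k), p j))})
    = sSup ((fun p : Fin K → ℝ =>
        ∑ k, θt k *
          Real.log ((1 + h k * ∑ j ∈ Finset.univ.filter (· ≤ k), p j) /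
            (1 + h k * ∑ j ∈ Finset.univ.filter (· < k), p j))) ''
      {p | (∀ k, 0 ≤ p k) ∧ (∑ k, p k) ≤ P}) := by
  choose S hS_max hS_θ using fun k => (hθt k).1
  have hθt_nonneg : ∀ k, 0 ≤ θt k := fun k => hS_θ k ▸ hθ _ (nonempty_of_max_eq_coe (hS_max k))
  apply csSup_eq_csSup_of_forall_exists_le
  · rintro _ ⟨r, ⟨hr, p, hp, hpP, hrate⟩, rfl⟩
    exact ⟨_, ⟨p, ⟨hp, hpP⟩, rfl⟩,
      sum_filter_nonempty_mul_le_sum_mul (fun k J hJ => (hθt k).2 ⟨J, hJ, rfl⟩) hθt_nonneg hr hrate⟩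
  · rintro _ ⟨p, ⟨hp, hpP⟩, rfl⟩
    obtain ⟨r, hr, hrate, hsum⟩ :=
      exists_rates_eq_of_max_eq hS_max (fun k => log_one_add_mul_sum_div_nonneg (hh k).le hp k) θ
    refine ⟨_, ⟨r, ⟨hr, p, hp, hpP, fun k => (hrate k).le⟩, rfl⟩, ?_⟩
    simp only [hsum, hS_θ, le_refl]

/-- Weighted-sum-rate reduction: maximizing `∑_J θ_J r_J` over the degraded
broadcast channel region `Γ` (rates indexed by nonempty subsets `J`, grouped by
`max J`) reduces to the `K`-variable power allocation problem with weights
`θ̃_k = max {θ_J : max J = k}`. -/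
theorem stmt0 (K : ℕ) (hK : 1 ≤ K) (P : ℝ) (hP : 0 < P)
    (h : Fin K → ℝ) (hh : ∀ k, 0 < h k)
    (hmono : ∀ j k : Fin K, j ≤ k → h k ≤ h j)
    (θ : Finset (Fin K) → ℝ) (hθ : ∀ J : Finset (Fin K), J.Nonempty → 0 ≤ θ J)
    (θt : Fin K → ℝ)
    (hθt : ∀ k : Fin K,
      IsGreatest {x : ℝ | ∃ J : Finset (Fin K),
        J.max = (k : WithBot (Fin K)) ∧ θ J = x} (θt k)) :
    sSup ((fun r : Finset (Fin K) → ℝ =>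
        ∑ J ∈ Finset.univ.filter (fun J : Finset (Fin K) => J.Nonempty),
          θ J * r J) ''
      {r | (∀ J : Finset (Fin K), J.Nonempty → 0 ≤ r J) ∧
        ∃ p : Fin K → ℝ, (∀ k, 0 ≤ p k) ∧ (∑ k, p k) ≤ P ∧
          ∀ k : Fin K,
            (∑ J ∈ Finset.univ.filter
                (fun J : Finset (Fin K) => J.max = (k : WithBot (Fin K))), r J)
              ≤ Real.log ((1 + h k * ∑ j ∈ Finset.univ.filter (· ≤ k), p j) /
                  (1 + h k * ∑ j ∈ Finset.univ.filter (· < k), p j))})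
    = sSup ((fun p : Fin K → ℝ =>
        ∑ k, θt k *
          Real.log ((1 + h k * ∑ j ∈ Finset.univ.filter (· ≤ k), p j) /
            (1 + h k * ∑ j ∈ Finset.univ.filter (· < k), p j))) ''
      {p | (∀ k, 0 ≤ p k) ∧ (∑ k, p k) ≤ P}) :=
  stmt0_general K P h hh θ hθ θt hθt
end

section
/- Let K ≥ 1, P > 0, h_k > 0 and θ_k ≥ 0 for k = 1,...,K. For every power vector p ∈ ℝ^K with p_k ≥ 0 and Σ_{k=1}^K p_k ≤ P, writing P_k = Σ_{j=1}^k p_j (with P_0 = 0), we have Σ_{k=1}^K θ_k · log((1 + h_k P_k)/(1 + h_k P_{k−1})) ≤ ∫_0^P max_{1 ≤ k ≤ K} θ_k/(1/h_k + z) dz. -/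
/-!
Rewriting `1 + h x = h (1/h + x)`, the `k`-th rate `θ_k log((1 + h_k P_k)/(1 + h_k P_{k-1}))` is
the integral of `u_k z = θ_k/(1/h_k + z)` over `[P_{k-1}, P_k]`. Bounding each `u_k` by the
pointwise maximum `u`, the intervals tile `[0, P_K]`, and `u ≥ 0` extends the integral to `[0, P]`.
-/

open Finset Set MeasureTheory

theorem integral_const_div_add {c a b : ℝ} (θ : ℝ) (ha : 0 < c + a) (hb : 0 < c + b) :
    ∫ z in a..b, θ / (c + z) = θ * Real.log ((c + b) / (c + a)) := by
  simp_rw [div_eq_mul_inv θ, intervalIntegral.integral_const_mul,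
    intervalIntegral.integral_comp_add_left (fun x => x⁻¹), integral_inv_of_pos ha hb]

theorem mul_log_one_add_mul_div_eq_integral {h a b : ℝ} (θ : ℝ) (hh : 0 < h) (ha : 0 ≤ a)
    (hb : 0 ≤ b) :
    θ * Real.log ((1 + h * b) / (1 + h * a)) = ∫ z in a..b, θ / (1 / h + z) := by
  have hc : 0 < 1 / h := one_div_pos.mpr hh
  rw [integral_const_div_add θ (by positivity) (by positivity)]
  congr 2
  field_simp

theorem continuousOn_const_div_add {c : ℝ} (θ : ℝ) (hc : 0 < c) :
    ContinuousOn (fun z => θ / (c + z)) (Ici 0) :=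
  continuousOn_const.div (continuousOn_const.add continuousOn_id) fun _ hz =>
    (add_pos_of_pos_of_nonneg hc hz).ne'

theorem ContinuousOn.intervalIntegrable_of_Ici {f : ℝ → ℝ} {a b c : ℝ}
    (hf : ContinuousOn f (Ici a)) (ha : a ≤ b) (hbc : b ≤ c) : IntervalIntegrable f volume b c :=
  (hf.mono ((Icc_subset_Ici_iff hbc).mpr ha)).intervalIntegrable_of_Icc hbc

theorem sum_integral_adjacent_le_integral {f : ℝ → ℝ} {a : ℕ → ℝ} {n : ℕ} {c d : ℝ}
    (ha : Monotone a) (hc : c ≤ a 0) (hd : a n ≤ d) (hf : IntervalIntegrable f volume c d)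
    (hf_nonneg : ∀ x ∈ Icc c d, 0 ≤ f x) :
    ∑ i ∈ range n, ∫ x in a i..a (i + 1), f x ≤ ∫ x in c..d, f x := by
  have hsub : ∀ i ≤ n, a i ∈ Icc c d := fun i hi =>
    ⟨hc.trans (ha i.zero_le), (ha hi).trans hd⟩
  rw [intervalIntegral.sum_integral_adjacent_intervals fun i hi =>
    hf.mono_set (uIcc_subset_uIcc (Icc_subset_uIcc (hsub i hi.le))
      (Icc_subset_uIcc (hsub (i + 1) hi)))]
  refine intervalIntegral.integral_mono_interval hc (ha n.zero_le) hd ?_ hf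
  filter_upwards [ae_restrict_mem measurableSet_Ioc] with x hx
  exact hf_nonneg x (Ioc_subset_Icc_self hx)

section PrefixSum

variable {M : Type*} [AddCommMonoid M] {K : ℕ}

/-- `p 0 + ⋯ + p (n - 1)`, where terms of index `≥ K` are absent. -/
def prefixSum (p : Fin K → M) (n : ℕ) : M :=
  ∑ j ∈ univ.filter (fun j : Fin K => (j : ℕ) < n), p j

theorem prefixSum_zero (p : Fin K → M) : prefixSum p 0 = 0 := by
  simp [prefixSum]

theorem prefixSum_self (p : Fin K → M) : prefixSum p K = ∑ j, p j := by
  simp [prefixSum]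

theorem sum_filter_lt_eq_prefixSum (p : Fin K → M) (k : Fin K) :
    ∑ j ∈ univ.filter (· < k), p j = prefixSum p k :=
  rfl

theorem sum_filter_le_eq_prefixSum (p : Fin K → M) (k : Fin K) :
    ∑ j ∈ univ.filter (· ≤ k), p j = prefixSum p (k + 1) := by
  simp only [prefixSum, Nat.lt_succ_iff, Fin.le_def]

theorem prefixSum_mono [PartialOrder M] [IsOrderedAddMonoid M] {p : Fin K → M}
    (hp : ∀ k, 0 ≤ p k) : Monotone (prefixSum p) := fun _ _ hmn =>
  sum_le_sum_of_subset_of_nonneg (monotone_filter_right _ fun _ _ hj => hj.trans_le hmn)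
    fun j _ _ => hp j

end PrefixSum

theorem stmt5_general (K : ℕ) (hK : 1 ≤ K) (P : ℝ)
    (h θ : Fin K → ℝ) (hh : ∀ k, 0 < h k) (hθ : ∀ k, 0 ≤ θ k)
    (p : Fin K → ℝ) (hp : ∀ k, 0 ≤ p k) (hsum : ∑ k, p k ≤ P) :
    ∑ k, θ k *
        Real.log ((1 + h k * ∑ j ∈ Finset.univ.filter (· ≤ k), p j) /
          (1 + h k * ∑ j ∈ Finset.univ.filter (· < k), p j))
      ≤ ∫ z in (0 : ℝ)..P,
          Finset.univ.sup' (Finset.univ_nonempty_iff.mpr ⟨⟨0, hK⟩⟩)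
            (fun k => θ k / (1 / h k + z)) := by
  set u : ℝ → ℝ := fun z => univ.sup' _ fun k => θ k / (1 / h k + z)
  set a := prefixSum p
  have ha : Monotone a := prefixSum_mono hp
  have ha_nonneg (n : ℕ) : 0 ≤ a n := prefixSum_zero p ▸ ha n.zero_le
  have haK : a K ≤ P := (prefixSum_self p).trans_le hsum
  have hu_le (k : Fin K) (z : ℝ) : θ k / (1 / h k + z) ≤ u z :=
    le_sup' (fun k => θ k / (1 / h k + z)) (mem_univ k)
  have hu : ContinuousOn u (Ici 0) := ContinuousOn.finset_sup'_apply _ fun k _ =>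
    continuousOn_const_div_add (θ k) (one_div_pos.mpr (hh k))
  calc _ = ∑ k : Fin K, ∫ z in a k..a (k + 1), θ k / (1 / h k + z) := by
        refine sum_congr rfl fun k _ => ?_
        rw [sum_filter_le_eq_prefixSum, sum_filter_lt_eq_prefixSum,
          mul_log_one_add_mul_div_eq_integral _ (hh _) (ha_nonneg _) (ha_nonneg _)]
    _ ≤ ∑ k : Fin K, ∫ z in a k..a (k + 1), u z := by
        refine sum_le_sum fun k _ => ?_
        have hk : a k ≤ a (k + 1) := ha (k : ℕ).le_succ
        have hu_k := continuousOn_const_div_add (θ k) (one_div_pos.mpr (hh k))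
        exact intervalIntegral.integral_mono_on hk (hu_k.intervalIntegrable_of_Ici (ha_nonneg k) hk)
          (hu.intervalIntegrable_of_Ici (ha_nonneg k) hk) fun z _ => hu_le k z
    _ = ∑ i ∈ range K, ∫ z in a i..a (i + 1), u z :=
        Fin.sum_univ_eq_sum_range (fun i => ∫ z in a i..a (i + 1), u z) K
    _ ≤ ∫ z in (0 : ℝ)..P, u z := by
        refine sum_integral_adjacent_le_integral ha (prefixSum_zero p).ge haK
          (hu.intervalIntegrable_of_Ici le_rfl ((ha_nonneg K).trans haK)) fun z hz => ?_
        have hpos : 0 < 1 / h ⟨0, hK⟩ + z := add_pos_of_pos_of_nonneg (one_div_pos.mpr (hh _)) hz.1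
        exact (div_nonneg (hθ _) hpos.le).trans (hu_le ⟨0, hK⟩ z)

/-- Upper bound for the weighted sum rate: for any feasible power split,
`∑_k θ_k log((1 + h_k P_k)/(1 + h_k P_{k-1})) ≤ ∫_0^P max_k θ_k/(1/h_k + z) dz`. -/
theorem stmt5 (K : ℕ) (hK : 1 ≤ K) (P : ℝ) (hP : 0 < P)
    (h θ : Fin K → ℝ) (hh : ∀ k, 0 < h k) (hθ : ∀ k, 0 ≤ θ k)
    (p : Fin K → ℝ) (hp : ∀ k, 0 ≤ p k) (hsum : ∑ k, p k ≤ P) :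
    ∑ k, θ k *
        Real.log ((1 + h k * ∑ j ∈ Finset.univ.filter (· ≤ k), p j) /
          (1 + h k * ∑ j ∈ Finset.univ.filter (· < k), p j))
      ≤ ∫ z in (0 : ℝ)..P,
          Finset.univ.sup' (Finset.univ_nonempty_iff.mpr ⟨⟨0, hK⟩⟩)
            (fun k => θ k / (1 / h k + z)) :=
  stmt5_general K hK P h θ hh hθ p hp hsum
end

section
/- Let K ≥ 1, P > 0, h_1 ≥ h_2 ≥ ... ≥ h_K > 0 and θ_k ≥ 0 for k = 1,...,K. Then sup { Σ_{k=1}^K θ_k · log((1 + h_k Σ_{j=1}^k p_j)/(1 + h_k Σ_{j=1}^{k−1} p_j)) : p ∈ ℝ^K, p_k ≥ 0, Σ_{k=1}^K p_k ≤ P } = ∫_0^P max_{1 ≤ k ≤ K} θ_k/(1/h_k + z) dz. -/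
/-!
With partial sums `s_k = p_1 + ⋯ + p_{k-1}`, the `k`-th rate term is
`θ_k log((1/h_k + s_{k+1}) / (1/h_k + s_k)) = ∫_{s_k}^{s_{k+1}} u_k`, where
`u_k(z) = θ_k / (1/h_k + z)`. Bounding `u_k` by the upper envelope `M = max_k u_k` and using
`M ≥ 0` gives `∑ rates ≤ ∫_0^P M` for every feasible `p`.

Conversely, since `1/h_k` increases with `k`, the utilities have the single-crossing property:
once `u_j` catches up with `u_i` for `i < j`, it stays ahead. Hence the set of `z` at which the
maximum is attained at an index `≥ k` is upward closed; its infimum `t_k` gives breakpoints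
`0 = t_0 ≤ t_1 ≤ ⋯ ≤ t_K = P` with `u_k = M` on `(t_k, t_{k+1})`, and the greedy allocation
`p_k = t_{k+1} - t_k` attains `∫_0^P M`.
-/

open Finset Real MeasureTheory

lemma integral_div_const_add {θ c a b : ℝ} (ha : 0 < c + a) (hb : 0 < c + b) :
    ∫ z in a..b, θ / (c + z) = θ * log ((c + b) / (c + a)) := by
  simp only [div_eq_mul_inv θ]
  rw [intervalIntegral.integral_const_mul,
    intervalIntegral.integral_comp_add_left (fun x => x⁻¹) c, integral_inv_of_pos ha hb]

lemma div_add_le_div_add_of_le {θi θj ci cj w z : ℝ} (hθj : 0 ≤ θj) (hw : 0 < ci + w)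
    (hc : ci ≤ cj) (hwz : w ≤ z) (hle : θi / (ci + w) ≤ θj / (cj + w)) :
    θi / (ci + z) ≤ θj / (cj + z) := by
  rw [div_le_div_iff₀ hw (by linarith)] at hle
  rw [div_le_div_iff₀ (by linarith) (by linarith)]
  have hθ : θi ≤ θj := by nlinarith
  nlinarith

lemma sum_integral_fin_adjacent {f : ℝ → ℝ} {K : ℕ} {s : ℕ → ℝ}
    (hf : ∀ i < K, IntervalIntegrable f volume (s i) (s (i + 1))) :
    ∑ k : Fin K, ∫ z in s k..s (k + 1), f z = ∫ z in s 0..s K, f z := by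
  rw [Fin.sum_univ_eq_sum_range (fun i => ∫ z in s i..s (i + 1), f z),
    intervalIntegral.sum_integral_adjacent_intervals hf]

lemma integral_congr_Ioo {f g : ℝ → ℝ} {a b : ℝ} (hab : a ≤ b) (hfg : Set.EqOn f g (Set.Ioo a b)) :
    ∫ z in a..b, f z = ∫ z in a..b, g z := by
  rw [intervalIntegral.integral_of_le hab, intervalIntegral.integral_of_le hab,
    integral_Ioc_eq_integral_Ioo, integral_Ioc_eq_integral_Ioo]
  exact setIntegral_congr_fun measurableSet_Ioo hfg

noncomputable section

namespace GreedyPower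

variable {K : ℕ}

def partialSum (p : Fin K → ℝ) (n : ℕ) : ℝ :=
  ∑ j ∈ univ.filter (fun j : Fin K => j.val < n), p j

lemma sum_filter_le_eq_partialSum (p : Fin K → ℝ) (k : Fin K) :
    ∑ j ∈ univ.filter (· ≤ k), p j = partialSum p (k + 1) := by
  simp only [partialSum, Fin.le_def, Nat.lt_succ_iff]

lemma sum_filter_lt_eq_partialSum (p : Fin K → ℝ) (k : Fin K) :
    ∑ j ∈ univ.filter (· < k), p j = partialSum p k := by
  simp only [partialSum, Fin.lt_def]

lemma partialSum_zero (p : Fin K → ℝ) : partialSum p 0 = 0 := by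
  simp [partialSum]

lemma partialSum_self (p : Fin K → ℝ) : partialSum p K = ∑ j, p j := by
  simp [partialSum]

lemma partialSum_mono {p : Fin K → ℝ} (hp : ∀ j, 0 ≤ p j) : Monotone (partialSum p) :=
  fun _ _ hmn => sum_le_sum_of_subset_of_nonneg
    (monotone_filter_right _ fun _ _ hj => hj.trans_le hmn) fun j _ _ => hp j

lemma partialSum_nonneg {p : Fin K → ℝ} (hp : ∀ j, 0 ≤ p j) (n : ℕ) : 0 ≤ partialSum p n :=
  partialSum_zero p ▸ partialSum_mono hp n.zero_le

lemma partialSum_eq_sum_range (f : ℕ → ℝ) {n : ℕ} (hn : n ≤ K) :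
    partialSum (fun j : Fin K => f j) n = ∑ i ∈ range n, f i := by
  refine sum_bij (fun j _ => j.val) (by simp) (fun _ _ _ _ => Fin.ext) ?_ (fun _ _ => rfl)
  intro i hi
  exact ⟨⟨i, lt_of_lt_of_le (mem_range.1 hi) hn⟩, by simpa using hi, rfl⟩

variable (h θ : Fin K → ℝ)

def sumRate (p : Fin K → ℝ) : ℝ :=
  ∑ k, θ k * log ((1 + h k * ∑ j ∈ univ.filter (· ≤ k), p j) /
    (1 + h k * ∑ j ∈ univ.filter (· < k), p j))

def utility (k : Fin K) (z : ℝ) : ℝ := θ k / (1 / h k + z)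

variable {h θ}

lemma mul_log_eq_integral_utility (hh : ∀ k, 0 < h k) (k : Fin K) {a b : ℝ}
    (ha : 0 ≤ a) (hb : 0 ≤ b) :
    θ k * log ((1 + h k * b) / (1 + h k * a)) = ∫ z in a..b, utility h θ k z := by
  have hk := hh k
  have hc : 0 < 1 / h k := one_div_pos.2 hk
  rw [show utility h θ k = fun z => θ k / (1 / h k + z) from rfl,
    integral_div_const_add (by positivity) (by positivity)]
  congr 2
  field_simp

lemma sumRate_eq_sum_integral (hh : ∀ k, 0 < h k) {p : Fin K → ℝ} (hp : ∀ j, 0 ≤ p j) :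
    sumRate h θ p = ∑ k : Fin K,
      ∫ z in partialSum p k..partialSum p (k + 1), utility h θ k z := by
  refine sum_congr rfl fun k _ => ?_
  rw [sum_filter_le_eq_partialSum, sum_filter_lt_eq_partialSum,
    mul_log_eq_integral_utility hh k (partialSum_nonneg hp _) (partialSum_nonneg hp _)]

lemma antitoneOn_utility (hh : ∀ k, 0 < h k) (hθ : ∀ k, 0 ≤ θ k) (k : Fin K) :
    AntitoneOn (utility h θ k) (Set.Ici 0) := by
  intro x hx y _ hxy
  have : 0 < 1 / h k := one_div_pos.2 (hh k)
  have : (0 : ℝ) ≤ x := hx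
  unfold utility
  gcongr
  exact hθ k

lemma utility_nonneg (hh : ∀ k, 0 < h k) (hθ : ∀ k, 0 ≤ θ k) (k : Fin K) {z : ℝ} (hz : 0 ≤ z) :
    0 ≤ utility h θ k z := by
  have : 0 < 1 / h k := one_div_pos.2 (hh k)
  exact div_nonneg (hθ k) (by positivity)

lemma utility_le_utility_of_le (hh : ∀ k, 0 < h k) (hmono : Antitone h) (hθ : ∀ k, 0 ≤ θ k)
    {i j : Fin K} (hij : i ≤ j) {w z : ℝ} (hw : 0 ≤ w) (hwz : w ≤ z)
    (hle : utility h θ i w ≤ utility h θ j w) : utility h θ i z ≤ utility h θ j z :=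
  have : 0 < 1 / h i := one_div_pos.2 (hh i)
  div_add_le_div_add_of_le (hθ j) (by positivity) (one_div_le_one_div_of_le (hh j) (hmono hij))
    hwz hle

section Envelope

variable (h θ)

def envelope (hne : (univ : Finset (Fin K)).Nonempty) (z : ℝ) : ℝ :=
  univ.sup' hne fun k => utility h θ k z

variable {h θ} {hne : (univ : Finset (Fin K)).Nonempty}

lemma utility_le_envelope (k : Fin K) (z : ℝ) : utility h θ k z ≤ envelope h θ hne z :=
  le_sup' (fun k => utility h θ k z) (mem_univ k)

lemma envelope_nonneg (hh : ∀ k, 0 < h k) (hθ : ∀ k, 0 ≤ θ k) {z : ℝ} (hz : 0 ≤ z) :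
    0 ≤ envelope h θ hne z :=
  let ⟨k, _⟩ := hne
  (utility_nonneg hh hθ k hz).trans (utility_le_envelope k z)

lemma antitoneOn_envelope (hh : ∀ k, 0 < h k) (hθ : ∀ k, 0 ≤ θ k) :
    AntitoneOn (envelope h θ hne) (Set.Ici 0) := fun _ hx _ hy hxy =>
  sup'_le _ _ fun k _ => (antitoneOn_utility hh hθ k hx hy hxy).trans (utility_le_envelope k _)

lemma intervalIntegrable_envelope (hh : ∀ k, 0 < h k) (hθ : ∀ k, 0 ≤ θ k) {a b : ℝ}
    (ha : 0 ≤ a) (hb : 0 ≤ b) : IntervalIntegrable (envelope h θ hne) volume a b :=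
  ((antitoneOn_envelope hh hθ).mono fun _ hx => (le_min ha hb).trans hx.1).intervalIntegrable

lemma intervalIntegrable_utility (hh : ∀ k, 0 < h k) (hθ : ∀ k, 0 ≤ θ k) (k : Fin K) {a b : ℝ}
    (ha : 0 ≤ a) (hb : 0 ≤ b) : IntervalIntegrable (utility h θ k) volume a b :=
  ((antitoneOn_utility hh hθ k).mono fun _ hx => (le_min ha hb).trans hx.1).intervalIntegrable

lemma sumRate_le_integral_envelope (hh : ∀ k, 0 < h k) (hθ : ∀ k, 0 ≤ θ k) {P : ℝ}
    {p : Fin K → ℝ} (hp : ∀ j, 0 ≤ p j) (hpP : ∑ j, p j ≤ P) :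
    sumRate h θ p ≤ ∫ z in (0 : ℝ)..P, envelope h θ hne z := by
  have hs := partialSum_nonneg hp
  have hsP : partialSum p K ≤ P := partialSum_self p ▸ hpP
  calc sumRate h θ p
      ≤ ∑ k : Fin K, ∫ z in partialSum p k..partialSum p (k + 1), envelope h θ hne z := by
        rw [sumRate_eq_sum_integral hh hp]
        exact sum_le_sum fun k _ => intervalIntegral.integral_mono_on
          (partialSum_mono hp k.val.le_succ) (intervalIntegrable_utility hh hθ k (hs _) (hs _))
          (intervalIntegrable_envelope hh hθ (hs _) (hs _)) fun z _ => utility_le_envelope k z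
    _ = ∫ z in (0 : ℝ)..partialSum p K, envelope h θ hne z := by
        rw [sum_integral_fin_adjacent (s := partialSum p) fun i _ =>
            intervalIntegrable_envelope hh hθ (hs _) (hs _),
          partialSum_zero]
    _ ≤ ∫ z in (0 : ℝ)..P, envelope h θ hne z := by
        rw [← intervalIntegral.integral_add_adjacent_intervals
          (intervalIntegrable_envelope hh hθ le_rfl (hs K))
          (intervalIntegrable_envelope hh hθ (hs K) ((hs K).trans hsP))]
        exact le_add_of_nonneg_right <| intervalIntegral.integral_nonneg hsP fun z hz =>
          envelope_nonneg hh hθ ((hs K).trans hz.1)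

end Envelope

section Breakpoints

variable (h θ)

def maxAttainedFrom (k : ℕ) : Set ℝ :=
  {z | ∃ j : Fin K, k ≤ j.val ∧ ∀ i, utility h θ i z ≤ utility h θ j z}

/-- The point `P` is inserted so that the infimum is `P`, not the junk value `0`, when no point
of `[0, P]` has its maximum attained at an index `≥ k`. -/
def breakpoint (P : ℝ) (k : ℕ) : ℝ :=
  sInf (insert P (Set.Icc 0 P ∩ maxAttainedFrom h θ k))

def greedy (P : ℝ) (k : Fin K) : ℝ :=
  breakpoint h θ P (k + 1) - breakpoint h θ P k

variable {h θ} {P : ℝ}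

lemma mem_maxAttainedFrom_zero (hne : (univ : Finset (Fin K)).Nonempty) (z : ℝ) :
    z ∈ maxAttainedFrom h θ 0 :=
  let ⟨j, _, hj⟩ := exists_max_image univ (fun j => utility h θ j z) hne
  ⟨j, j.val.zero_le, fun i => hj i (mem_univ i)⟩

lemma maxAttainedFrom_self : maxAttainedFrom h θ K = ∅ :=
  Set.eq_empty_of_forall_notMem fun _ ⟨j, hj, _⟩ => (j.isLt.trans_le hj).false

lemma antitone_maxAttainedFrom : Antitone (maxAttainedFrom h θ) :=
  fun _ _ hkl _ ⟨j, hj, hmax⟩ => ⟨j, hkl.trans hj, hmax⟩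

lemma mem_maxAttainedFrom_of_le (hh : ∀ k, 0 < h k) (hmono : Antitone h)
    (hθ : ∀ k, 0 ≤ θ k) {k : ℕ} {w z : ℝ} (hw : 0 ≤ w) (hwz : w ≤ z)
    (hwk : w ∈ maxAttainedFrom h θ k) : z ∈ maxAttainedFrom h θ k := by
  obtain ⟨j, hkj, hj⟩ := hwk
  obtain ⟨m, -, hm⟩ := exists_max_image univ (fun i => utility h θ i z) ⟨j, mem_univ j⟩
  by_cases hkm : k ≤ m.val
  · exact ⟨m, hkm, fun i => hm i (mem_univ i)⟩
  · have hmj : utility h θ m z ≤ utility h θ j z :=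
      utility_le_utility_of_le hh hmono hθ (Fin.le_def.2 (by omega)) hw hwz (hj m)
    exact ⟨j, hkj, fun i => (hm i (mem_univ i)).trans hmj⟩

lemma utility_le_of_mem_diff {k : ℕ} (hk : k < K) {z : ℝ} (hz : z ∈ maxAttainedFrom h θ k)
    (hz' : z ∉ maxAttainedFrom h θ (k + 1)) (i : Fin K) :
    utility h θ i z ≤ utility h θ ⟨k, hk⟩ z := by
  obtain ⟨j, hkj, hj⟩ := hz
  obtain rfl : j = ⟨k, hk⟩ := Fin.ext <| show j.val = k by
    by_contra hjk
    exact hz' ⟨j, by omega, hj⟩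
  exact hj i

lemma bddBelow_breakpointSet (hP : 0 ≤ P) (k : ℕ) :
    BddBelow (insert P (Set.Icc 0 P ∩ maxAttainedFrom h θ k)) := by
  refine ⟨0, ?_⟩
  rintro z (rfl | ⟨hz, -⟩)
  exacts [hP, hz.1]

lemma breakpoint_nonneg (hP : 0 ≤ P) (k : ℕ) : 0 ≤ breakpoint h θ P k := by
  refine le_csInf (Set.insert_nonempty _ _) ?_
  rintro z (rfl | ⟨hz, -⟩)
  exacts [hP, hz.1]

lemma breakpoint_le (hP : 0 ≤ P) (k : ℕ) : breakpoint h θ P k ≤ P :=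
  csInf_le (bddBelow_breakpointSet hP k) (Set.mem_insert _ _)

lemma breakpoint_zero (hne : (univ : Finset (Fin K)).Nonempty) (hP : 0 ≤ P) :
    breakpoint h θ P 0 = 0 :=
  le_antisymm (csInf_le (bddBelow_breakpointSet hP 0) <|
      Set.mem_insert_of_mem _ ⟨⟨le_rfl, hP⟩, mem_maxAttainedFrom_zero hne 0⟩)
    (breakpoint_nonneg hP 0)

lemma breakpoint_self : breakpoint h θ P K = P := by
  rw [breakpoint, maxAttainedFrom_self, Set.inter_empty, insert_empty_eq, csInf_singleton]

lemma monotone_breakpoint (hP : 0 ≤ P) : Monotone (breakpoint h θ P) :=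
  fun _ _ hkl => csInf_le_csInf (bddBelow_breakpointSet hP _) (Set.insert_nonempty _ _) <|
    Set.insert_subset_insert <| Set.inter_subset_inter_right _ (antitone_maxAttainedFrom hkl)

lemma mem_maxAttainedFrom_of_breakpoint_lt (hh : ∀ k, 0 < h k) (hmono : Antitone h)
    (hθ : ∀ k, 0 ≤ θ k) {k : ℕ} {z : ℝ} (hz : breakpoint h θ P k < z) (hzP : z ≤ P) :
    z ∈ maxAttainedFrom h θ k := by
  obtain ⟨w, hw | ⟨hw, hwk⟩, hwz⟩ := exists_lt_of_csInf_lt (Set.insert_nonempty _ _) hz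
  · exact absurd (hw ▸ hwz) hzP.not_gt
  · exact mem_maxAttainedFrom_of_le hh hmono hθ hw.1 hwz.le hwk

lemma notMem_maxAttainedFrom_of_lt_breakpoint (hP : 0 ≤ P) {k : ℕ} {z : ℝ} (hz0 : 0 ≤ z)
    (hzP : z ≤ P) (hz : z < breakpoint h θ P k) : z ∉ maxAttainedFrom h θ k := fun hzk =>
  hz.not_ge (csInf_le (bddBelow_breakpointSet hP k) (Set.mem_insert_of_mem _ ⟨⟨hz0, hzP⟩, hzk⟩))

lemma envelope_eq_utility_of_mem_Ioo (hh : ∀ k, 0 < h k) (hmono : Antitone h)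
    (hθ : ∀ k, 0 ≤ θ k) (hne : (univ : Finset (Fin K)).Nonempty) (hP : 0 ≤ P) {k : ℕ}
    (hk : k < K) {z : ℝ} (hz : z ∈ Set.Ioo (breakpoint h θ P k) (breakpoint h θ P (k + 1))) :
    envelope h θ hne z = utility h θ ⟨k, hk⟩ z := by
  have hzP : z ≤ P := hz.2.le.trans (breakpoint_le hP _)
  have hz0 : 0 ≤ z := (breakpoint_nonneg hP k).trans hz.1.le
  refine le_antisymm (sup'_le _ _ fun i _ => utility_le_of_mem_diff hk ?_ ?_ i)
    (utility_le_envelope _ z)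
  · exact mem_maxAttainedFrom_of_breakpoint_lt hh hmono hθ hz.1 hzP
  · exact notMem_maxAttainedFrom_of_lt_breakpoint hP hz0 hzP hz.2

lemma greedy_nonneg (hP : 0 ≤ P) (k : Fin K) : 0 ≤ greedy h θ P k :=
  sub_nonneg.2 (monotone_breakpoint hP k.val.le_succ)

lemma partialSum_greedy (hne : (univ : Finset (Fin K)).Nonempty) (hP : 0 ≤ P) {n : ℕ}
    (hn : n ≤ K) : partialSum (greedy h θ P) n = breakpoint h θ P n := by
  refine (partialSum_eq_sum_range
    (fun i => breakpoint h θ P (i + 1) - breakpoint h θ P i) hn).trans ?_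
  rw [sum_range_sub, breakpoint_zero hne hP, sub_zero]

lemma sum_greedy (hne : (univ : Finset (Fin K)).Nonempty) (hP : 0 ≤ P) :
    ∑ k, greedy h θ P k = P := by
  rw [← partialSum_self, partialSum_greedy hne hP le_rfl, breakpoint_self]

lemma sumRate_greedy (hh : ∀ k, 0 < h k) (hmono : Antitone h) (hθ : ∀ k, 0 ≤ θ k)
    (hne : (univ : Finset (Fin K)).Nonempty) (hP : 0 ≤ P) :
    sumRate h θ (greedy h θ P) = ∫ z in (0 : ℝ)..P, envelope h θ hne z := by
  have hb := breakpoint_nonneg (h := h) (θ := θ) hP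
  calc sumRate h θ (greedy h θ P)
      = ∑ k : Fin K, ∫ z in breakpoint h θ P k..breakpoint h θ P (k + 1), utility h θ k z := by
        rw [sumRate_eq_sum_integral hh (greedy_nonneg hP)]
        refine sum_congr rfl fun k _ => ?_
        rw [partialSum_greedy hne hP k.isLt.le, partialSum_greedy hne hP k.isLt]
    _ = ∑ k : Fin K, ∫ z in breakpoint h θ P k..breakpoint h θ P (k + 1), envelope h θ hne z :=
        sum_congr rfl fun k _ => integral_congr_Ioo (monotone_breakpoint hP k.val.le_succ)
          fun z hz => (envelope_eq_utility_of_mem_Ioo hh hmono hθ hne hP k.isLt hz).symm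
    _ = ∫ z in (0 : ℝ)..P, envelope h θ hne z := by
        rw [sum_integral_fin_adjacent (s := breakpoint h θ P) fun i _ =>
            intervalIntegrable_envelope hh hθ (hb _) (hb _),
          breakpoint_zero hne hP, breakpoint_self]

end Breakpoints

end GreedyPower

end

/-- Exact optimality of the greedy power allocation: with channel gains sorted
in decreasing order, the supremum of the weighted sum rate over all feasible
power splits equals `∫_0^P max_k θ_k/(1/h_k + z) dz`. -/
theorem stmt6 (K : ℕ) (hK : 1 ≤ K) (P : ℝ) (hP : 0 < P)
    (h θ : Fin K → ℝ) (hh : ∀ k, 0 < h k)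
    (hmono : ∀ j k : Fin K, j ≤ k → h k ≤ h j)
    (hθ : ∀ k, 0 ≤ θ k) :
    sSup ((fun p : Fin K → ℝ =>
        ∑ k, θ k *
          Real.log ((1 + h k * ∑ j ∈ Finset.univ.filter (· ≤ k), p j) /
            (1 + h k * ∑ j ∈ Finset.univ.filter (· < k), p j))) ''
        {p | (∀ k, 0 ≤ p k) ∧ ∑ k, p k ≤ P})
      = ∫ z in (0 : ℝ)..P,
          Finset.univ.sup' (Finset.univ_nonempty_iff.mpr ⟨⟨0, hK⟩⟩)
            (fun k => θ k / (1 / h k + z)) := by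
  open GreedyPower in
  have hne : (univ : Finset (Fin K)).Nonempty := univ_nonempty_iff.mpr ⟨⟨0, hK⟩⟩
  change sSup (sumRate h θ '' _) = ∫ z in (0 : ℝ)..P, envelope h θ hne z
  refine IsGreatest.csSup_eq ⟨⟨greedy h θ P, ⟨greedy_nonneg hP.le, (sum_greedy hne hP.le).le⟩,
    sumRate_greedy hh hmono hθ hne hP.le⟩, ?_⟩
  rintro _ ⟨p, ⟨hp, hpP⟩, rfl⟩
  exact sumRate_le_integral_envelope hh hθ hp hpP
end

section
/- Let L : ℕ → ℝ with L(t) ≥ 0 for all t, let V > 0, B ∈ ℝ, g* ∈ ℝ, and let (g_t)_{t ∈ ℕ} be a real sequence such that L(t+1) − L(t) − V·g_t ≤ B − V·g* for all t ∈ ℕ. Then liminf_{T → ∞} (1/T) Σ_{t=0}^{T−1} g_t ≥ g* − B/V. -/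
/-!
Summing the drift inequality over `t < T` telescopes to
`L T - L 0 - V ∑ g ≤ T (B - V g*)`; since `L T ≥ 0`, the time average of `g` up to `T` is at
least `g* - B / V - L 0 / (V T)`, and this lower bound tends to `g* - B / V`.
-/

open Filter Finset Topology

theorem sub_le_sum_of_forall_succ_sub_le {α : Type*} [AddCommGroup α] [PartialOrder α]
    [IsOrderedAddMonoid α] {L a : ℕ → α} (h : ∀ t, L (t + 1) - L t ≤ a t) (T : ℕ) :
    L T - L 0 ≤ ∑ t ∈ range T, a t := by
  rw [← sum_range_sub]
  exact sum_le_sum fun t _ => h t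

theorem le_average_of_drift_plus_penalty_le {L g : ℕ → ℝ} {V B gstar : ℝ}
    (hV : 0 < V) (hdrift : ∀ t, L (t + 1) - L t - V * g t ≤ B - V * gstar)
    {T : ℕ} (hT : 0 < T) (hLT : 0 ≤ L T) :
    gstar - B / V - L 0 / V / T ≤ 1 / T * ∑ t ∈ range T, g t := by
  have htelescope : L T - L 0 ≤ T * (B - V * gstar) + V * ∑ t ∈ range T, g t := by
    simpa only [sum_add_distrib, sum_const, card_range, nsmul_eq_mul, ← mul_sum] using
      sub_le_sum_of_forall_succ_sub_le (a := fun t => B - V * gstar + V * g t)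
        (fun t => by linarith [hdrift t]) T
  have hT' : (0 : ℝ) < T := by exact_mod_cast hT
  rw [← sub_nonneg]
  have hkey : 1 / T * ∑ t ∈ range T, g t - (gstar - B / V - L 0 / V / T)
      = (T * (B - V * gstar) + V * ∑ t ∈ range T, g t + L 0) / (V * T) := by
    field_simp
    ring
  rw [hkey]
  exact div_nonneg (by linarith) (by positivity)

/-- Deterministic drift-plus-penalty argument: if
`L(t+1) - L(t) - V g_t ≤ B - V g*` for all `t`, with `L ≥ 0` and `V > 0`,
then the long-term average utility is within `B/V` of `g*`. -/
theorem stmt14 (L : ℕ → ℝ) (hL : ∀ t, 0 ≤ L t) (V B gstar : ℝ) (hV : 0 < V)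
    (g : ℕ → ℝ)
    (hdrift : ∀ t, L (t + 1) - L t - V * g t ≤ B - V * gstar) :
    ((gstar - B / V : ℝ) : EReal) ≤
      Filter.liminf
        (fun T : ℕ =>
          (((1 / (T : ℝ)) * ∑ t ∈ Finset.range T, g t : ℝ) : EReal))
        Filter.atTop := by
  have hlower :
      Tendsto (fun T : ℕ => gstar - B / V - L 0 / V / T) atTop (𝓝 (gstar - B / V)) := by
    simpa using tendsto_const_nhds.sub (tendsto_const_div_atTop_nhds_zero_nat (L 0 / V))
  rw [← ((continuous_coe_real_ereal.tendsto _).comp hlower).liminf_eq]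
  refine liminf_le_liminf ?_
  filter_upwards [eventually_gt_atTop 0] with T hT
  exact EReal.coe_le_coe_iff.mpr
    (le_average_of_drift_plus_penalty_le hV hdrift hT (hL T))
end

section
/- Let γ_max > 0, V > 0, and let g : ℝ → ℝ be differentiable and strictly concave on [0, γ_max]. Let U, a, γ : ℕ → ℝ be sequences with U(t) ≥ 0, a(t) ≥ 0, γ(t) ∈ [0, γ_max], such that for every t, γ(t) maximizes x ↦ V·g(x) − U(t)·x over [0, γ_max], and U(t+1) = max(U(t) − a(t), 0) + γ(t). If U(0) ≤ V·g'(0) + γ_max, then U(t) ≤ V·g'(0) + γ_max for all t ∈ ℕ. -/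
/-- Deterministic bound on the virtual queue of the admission controller: if
`γ(t)` maximizes `x ↦ V g(x) - U(t) x` on `[0, γ_max]` and
`U(t+1) = [U(t) - a(t)]⁺ + γ(t)`, then `U(t) ≤ V g'(0) + γ_max` for all `t`
provided it holds at `t = 0`. Here `g` is differentiable and strictly concave
on `[0, γ_max]` and `g'(0)` is its (right) derivative at `0`. -/
theorem stmt15 (γmax V : ℝ) (hγmax : 0 < γmax) (hV : 0 < V)
    (g : ℝ → ℝ) (hdiff : DifferentiableOn ℝ g (Set.Icc 0 γmax))
    (hconc : StrictConcaveOn ℝ (Set.Icc 0 γmax) g)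
    (U a γ : ℕ → ℝ) (hU : ∀ t, 0 ≤ U t) (ha : ∀ t, 0 ≤ a t)
    (hγt : ∀ t, γ t ∈ Set.Icc 0 γmax)
    (hmax : ∀ t, ∀ x ∈ Set.Icc 0 γmax,
      V * g x - U t * x ≤ V * g (γ t) - U t * γ t)
    (hrec : ∀ t, U (t + 1) = max (U t - a t) 0 + γ t)
    (hU0 : U 0 ≤ V * derivWithin g (Set.Icc 0 γmax) 0 + γmax) :
    ∀ t, U t ≤ V * derivWithin g (Set.Icc 0 γmax) 0 + γmax := by
  set D := V * derivWithin g (Set.Icc 0 γmax) 0 with hD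
  intro t
  induction t with
  | zero => exact hU0
  | succ t ih =>
    have hmaxle : max (U t - a t) 0 ≤ U t := by
      have := ha t; have := hU t
      apply max_le <;> linarith
    by_cases hcase : U t ≤ D
    · -- U(t+1) ≤ U t + γ t ≤ D + γmax
      rw [hrec t]
      have := (hγt t).2
      linarith
    · -- U t > D : show γ t = 0
      push_neg at hcase
      have hγ0 : γ t = 0 := by
        by_contra hne
        have hγpos : 0 < γ t := lt_of_le_of_ne (hγt t).1 (Ne.symm hne)
        have h0mem : (0 : ℝ) ∈ Set.Icc 0 γmax := ⟨le_refl _, le_of_lt hγmax⟩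
        have hslope : slope g 0 (γ t) ≤ derivWithin g (Set.Icc 0 γmax) 0 :=
          hconc.concaveOn.slope_le_derivWithin h0mem (hγt t) hγpos (hdiff 0 h0mem)
        have hsl : (g (γ t) - g 0) / γ t ≤ derivWithin g (Set.Icc 0 γmax) 0 := by
          simpa [slope, div_eq_inv_mul] using hslope
        have h1 : g (γ t) - g 0 ≤ derivWithin g (Set.Icc 0 γmax) 0 * γ t := by
          rw [div_le_iff₀ hγpos] at hsl
          linarith [hsl]
        have h2 := hmax t 0 h0mem
        -- V * g 0 ≤ V * g (γ t) - U t * γ t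
        have h3 : U t * γ t ≤ V * (g (γ t) - g 0) := by nlinarith
        have h4 : V * (g (γ t) - g 0) ≤ D * γ t := by
          rw [hD]
          nlinarith
        have : U t ≤ D := by
          have := h3.trans h4
          exact le_of_mul_le_mul_right (by linarith) hγpos
        linarith
      rw [hrec t, hγ0]
      linarith
end
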